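/- Let m ≥ 1 be an integer, let ϱ, w ∈ ℂ, and let 0 ≤ l ≤ 2m. Set L(t) = (1 + conj(ϱ)·t)/(1 + |ϱ|²)^{1/2} and M(t) = (t − ϱ)/(1 + |ϱ|²)^{1/2}. Write L(t)^{2m−l}·M(t)^{l} = ∑_{j=0}^{2m} c_j·t^j as a polynomial in t, and set F(w) = ∑_{j=0}^{2m} c_j·C(2m,j)^{−1}·∑_{l₁} C(m,l₁)·C(m,j−l₁)·ϱ^{l₁}·w^{j−l₁} (inner sum over all integers l₁, with the convention C(p,q) = 0 for q < 0 or q > p). Then: if 0 ≤ l ≤ m, F(w) = C(2m,l)^{−1}·C(m,l)·(1 + |ϱ|²)^{m/2}·L(w)^{m−l}·M(w)^{l}; and if m < l ≤ 2m, F(w) = 0. -/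

import Mathlib

open Polynomial

/-- The normalizing factor `(1 + |ϱ|²)^{1/2}` as a complex number. -/
noncomputable def sρ (ϱ : ℂ) : ℂ := (Real.sqrt (1 + ‖ϱ‖ ^ 2) : ℂ)

/-- `L(t) = (1 + conj(ϱ)·t) / (1 + |ϱ|²)^{1/2}`. -/
noncomputable def Lfun (ϱ t : ℂ) : ℂ := (1 + (starRingEnd ℂ) ϱ * t) / sρ ϱ

/-- `M(t) = (t − ϱ) / (1 + |ϱ|²)^{1/2}`. -/
noncomputable def Mfun (ϱ t : ℂ) : ℂ := (t - ϱ) / sρ ϱ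

/-- The polynomial `L(X)^{2m−l}·M(X)^{l}`, whose coefficients are the `c_j`. -/
noncomputable def Ppoly (m l : ℕ) (ϱ : ℂ) : Polynomial ℂ :=
  (Polynomial.C (1 / sρ ϱ) + Polynomial.C ((starRingEnd ℂ) ϱ / sρ ϱ) * Polynomial.X) ^
      (2 * m - l) *
    (Polynomial.C (-ϱ / sρ ϱ) + Polynomial.C (1 / sρ ϱ) * Polynomial.X) ^ l

/-- `F(w) = ∑_{j=0}^{2m} c_j·C(2m,j)^{−1}·∑_{l₁} C(m,l₁)·C(m,j−l₁)·ϱ^{l₁}·w^{j−l₁}`. -/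
noncomputable def Ffun (m l : ℕ) (ϱ w : ℂ) : ℂ :=
  ∑ j ∈ Finset.range (2 * m + 1),
    (Ppoly m l ϱ).coeff j * (((2 * m).choose j : ℂ))⁻¹ *
      ∑ l₁ ∈ Finset.range (m + 1),
        if l₁ ≤ j then
          (m.choose l₁ : ℂ) * (m.choose (j - l₁) : ℂ) * ϱ ^ l₁ * w ^ (j - l₁)
        else 0

/-!
Let `s = (1 + |ϱ|²)^{1/2}`, `α = (1 - ϱY)/s` and `β = (conj ϱ + Y)/s`. The inner sum `e_j` in `F`
is the coefficient of `t^j` in `(1 + ϱt)^m (1 + wt)^m`, and `C(2m,l) c_j / C(2m,j)` is the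
coefficient of `Y^l` in `α^{2m-j} β^j`, as expanding `(L(X) + Y M(X))^{2m}` in `Y` or in `X`
shows. Hence `C(2m,l) F(w)` is the `Y^l`-coefficient of
`∑_j e_j α^{2m-j} β^j = (α + βϱ)^m (α + βw)^m`, where `α + βϱ = s` is constant and
`α + βw = L(w) + M(w) Y`.
-/

open Finset

theorem coeff_C_add_C_mul_X_pow {R : Type*} [CommSemiring R] (a b : R) (n k : ℕ) :
    ((C a + C b * X) ^ n).coeff k = n.choose k * a ^ (n - k) * b ^ k := by
  have term (i : ℕ) : (C b * X) ^ i * C a ^ (n - i) * (n.choose i : R[X]) =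
      C (b ^ i * a ^ (n - i) * n.choose i) * X ^ i := by
    rw [← C_eq_natCast]; simp only [C_mul, C_pow]; ring
  rw [add_comm, add_pow, finsetSum_coeff]
  simp only [term, coeff_C_mul_X_pow, sum_ite_eq, mem_range]
  split_ifs with h
  · ring
  · rw [Nat.choose_eq_zero_of_lt (by omega)]; simp

theorem choose_mul_coeff_pow_mul_pow_transpose {R : Type*} [CommRing R] [IsDomain R]
    [Infinite R]
    {n l : ℕ} (hl : l ≤ n) (j : ℕ) (u v p q : R) :
    (n.choose l : R) * ((C u + C v * X) ^ (n - l) * (C p + C q * X) ^ l).coeff j =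
      n.choose j * ((C u + C p * X) ^ (n - j) * (C v + C q * X) ^ j).coeff l := by
  -- The left-hand polynomial, evaluated at `t`, is the `X^j`-coefficient of `(A + t B)^n`.
  have hgen : ∑ k ∈ range (n + 1),
      C ((n.choose k : R) * ((C u + C v * X) ^ (n - k) * (C p + C q * X) ^ k).coeff j) * X ^ k =
      C (n.choose j : R) * ((C u + C p * X) ^ (n - j) * (C v + C q * X) ^ j) := by
    refine Polynomial.funext fun t => ?_
    calc _ = ((C t * (C p + C q * X) + (C u + C v * X)) ^ n).coeff j := by
          rw [add_pow, finsetSum_coeff, eval_finsetSum]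
          refine sum_congr rfl fun k _ => ?_
          have hterm : (C t * (C p + C q * X)) ^ k * (C u + C v * X) ^ (n - k) *
              (n.choose k : R[X]) =
              C (t ^ k * (n.choose k : R)) *
                ((C u + C v * X) ^ (n - k) * (C p + C q * X) ^ k) := by
            rw [mul_pow, ← C_pow, ← C_eq_natCast, C_mul]; ring
          rw [hterm, coeff_C_mul]
          simp only [eval_mul, eval_C, eval_pow, eval_X]
          ring
      _ = ((C (u + t * p) + C (v + t * q) * X) ^ n).coeff j := by
          congr 2; simp only [C_add, C_mul]; ring
      _ = _ := by
          rw [coeff_C_add_C_mul_X_pow]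
          simp only [eval_mul, eval_C, eval_pow, eval_add, eval_X]
          ring
  have hcoeff := congrArg (coeff · l) hgen
  simp only [finsetSum_coeff] at hcoeff
  rwa [sum_congr rfl fun k _ => coeff_C_mul_X_pow _ k l, sum_ite_eq,
    if_pos (mem_range.mpr (by omega)), coeff_C_mul] at hcoeff

def binomialConvolution {R : Type*} [CommSemiring R] (m n j : ℕ) (x y : R) : R :=
  ∑ i ∈ range (m + 1),
    if i ≤ j then (m.choose i : R) * n.choose (j - i) * x ^ i * y ^ (j - i) else 0

theorem map_binomialConvolution {R S : Type*} [CommSemiring R] [CommSemiring S] (f : R →+* S)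
    (m n j : ℕ) (x y : R) :
    f (binomialConvolution m n j x y) = binomialConvolution m n j (f x) (f y) := by
  simp only [binomialConvolution, map_sum, apply_ite f, map_mul, map_natCast, map_pow, map_zero]

theorem sum_pow_mul_pow_mul_binomialConvolution {R : Type*} [CommSemiring R] (m n : ℕ)
    (α β x y : R) :
    ∑ j ∈ range (m + n + 1), α ^ (m + n - j) * β ^ j * binomialConvolution m n j x y =
      (α + β * x) ^ m * (α + β * y) ^ n := by
  rw [add_comm α, add_comm α, add_pow, add_pow, sum_mul_sum]
  simp only [binomialConvolution, mul_sum, mul_ite, mul_zero]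
  rw [sum_comm]
  refine sum_congr rfl fun i hi => ?_
  have hi : i ≤ m := Nat.lt_succ_iff.mp (mem_range.mp hi)
  have hIco : (range (m + n + 1)).filter (i ≤ ·) = Ico i (m + n + 1) := by
    ext j; simp only [mem_filter, mem_range, mem_Ico]; omega
  rw [← sum_filter, hIco, sum_Ico_eq_sum_range]
  have hsub : range (n + 1) ⊆ range (m + n + 1 - i) := range_subset_range.mpr (by omega)
  rw [← sum_subset hsub fun k _ hk => by
    rw [Nat.choose_eq_zero_of_lt (by simpa using hk : n < i + k - i)]; simp]
  refine sum_congr rfl fun k hk => ?_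
  have hk : k ≤ n := Nat.lt_succ_iff.mp (mem_range.mp hk)
  rw [Nat.add_sub_cancel_left, show m + n - (i + k) = (m - i) + (n - k) by omega]
  ring

theorem choose_mul_sum_coeff_mul_binomialConvolution {K : Type*} [Field K] [CharZero K]
    {m l : ℕ} (hl : l ≤ 2 * m) (u v p q x y : K) :
    ((2 * m).choose l : K) * ∑ j ∈ range (2 * m + 1),
      ((C u + C v * X) ^ (2 * m - l) * (C p + C q * X) ^ l).coeff j * ((2 * m).choose j : K)⁻¹ *
        binomialConvolution m m j x y =
      ((C (u + v * x) + C (p + q * x) * X) ^ m *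
        (C (u + v * y) + C (p + q * y) * X) ^ m).coeff l := by
  have htranspose (j : ℕ) (hj : j ∈ range (2 * m + 1)) :
      ((2 * m).choose l : K) * (((C u + C v * X) ^ (2 * m - l) * (C p + C q * X) ^ l).coeff j *
        ((2 * m).choose j : K)⁻¹ * binomialConvolution m m j x y) =
      (C (binomialConvolution m m j x y) *
        ((C u + C p * X) ^ (2 * m - j) * (C v + C q * X) ^ j)).coeff l := by
    have hj : ((2 * m).choose j : K) ≠ 0 :=
      Nat.cast_ne_zero.mpr (Nat.choose_pos (Nat.lt_succ_iff.mp (mem_range.mp hj))).ne'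
    rw [coeff_C_mul, ← mul_assoc, ← mul_assoc, choose_mul_coeff_pow_mul_pow_transpose hl]
    field_simp
  rw [mul_sum, sum_congr rfl htranspose, ← finsetSum_coeff]
  congr 1
  calc _ = ∑ j ∈ range (m + m + 1), (C u + C p * X) ^ (m + m - j) * (C v + C q * X) ^ j *
          binomialConvolution m m j (C x) (C y) := by
        rw [← two_mul]
        exact sum_congr rfl fun j _ => by rw [map_binomialConvolution]; ring
    _ = _ := by
        rw [sum_pow_mul_pow_mul_binomialConvolution]
        simp only [C_add, C_mul]
        ring

theorem sρ_sq (ϱ : ℂ) : sρ ϱ ^ 2 = 1 + (starRingEnd ℂ) ϱ * ϱ := by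
  rw [sρ, ← Complex.ofReal_pow, Real.sq_sqrt (by positivity), Complex.conj_mul']
  push_cast; ring

theorem sρ_ne_zero (ϱ : ℂ) : sρ ϱ ≠ 0 :=
  Complex.ofReal_ne_zero.mpr (Real.sqrt_pos.mpr (by positivity)).ne'

theorem sρ_pow (ϱ : ℂ) (m : ℕ) :
    sρ ϱ ^ m = (((1 + ‖ϱ‖ ^ 2 : ℝ) ^ ((m : ℝ) / 2) : ℝ) : ℂ) := by
  rw [sρ, ← Complex.ofReal_pow, Real.sqrt_eq_rpow, ← Real.rpow_mul_natCast (by positivity)]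
  ring_nf

theorem choose_mul_Ffun {m l : ℕ} (hl : l ≤ 2 * m) (ϱ w : ℂ) :
    ((2 * m).choose l : ℂ) * Ffun m l ϱ w =
      sρ ϱ ^ m * (m.choose l * Lfun ϱ w ^ (m - l) * Mfun ϱ w ^ l) := by
  have hs := sρ_ne_zero ϱ
  have key := choose_mul_sum_coeff_mul_binomialConvolution hl (1 / sρ ϱ)
    ((starRingEnd ℂ) ϱ / sρ ϱ) (-ϱ / sρ ϱ) (1 / sρ ϱ) ϱ w
  have hx : 1 / sρ ϱ + (starRingEnd ℂ) ϱ / sρ ϱ * ϱ = sρ ϱ := by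
    field_simp; rw [sρ_sq]
  have hp : -ϱ / sρ ϱ + 1 / sρ ϱ * ϱ = 0 := by ring
  have hL : 1 / sρ ϱ + (starRingEnd ℂ) ϱ / sρ ϱ * w = Lfun ϱ w := by rw [Lfun]; ring
  have hM : -ϱ / sρ ϱ + 1 / sρ ϱ * w = Mfun ϱ w := by rw [Mfun]; ring
  rw [hx, hp, hL, hM, C_0, zero_mul, add_zero, ← C_pow, coeff_C_mul,
    coeff_C_add_C_mul_X_pow] at key
  exact key

theorem stmt_5_general (m : ℕ) (l : ℕ) (hl : l ≤ 2 * m) (ϱ w : ℂ) :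
    (l ≤ m →
      Ffun m l ϱ w =
        (((2 * m).choose l : ℂ))⁻¹ * (m.choose l : ℂ) *
          (((1 + ‖ϱ‖ ^ 2 : ℝ) ^ ((m : ℝ) / 2) : ℝ) : ℂ) *
          Lfun ϱ w ^ (m - l) * Mfun ϱ w ^ l) ∧
    (m < l → Ffun m l ϱ w = 0) := by
  have hchoose : ((2 * m).choose l : ℂ) ≠ 0 := Nat.cast_ne_zero.mpr (Nat.choose_pos hl).ne'
  have hF : Ffun m l ϱ w = ((2 * m).choose l : ℂ)⁻¹ *
      (sρ ϱ ^ m * (m.choose l * Lfun ϱ w ^ (m - l) * Mfun ϱ w ^ l)) := by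
    rw [← choose_mul_Ffun hl, inv_mul_cancel_left₀ hchoose]
  refine ⟨fun _ => ?_, fun hml => ?_⟩
  · rw [hF, sρ_pow]; ring
  · rw [hF, Nat.choose_eq_zero_of_lt hml]; simp

theorem stmt_5 (m : ℕ) (hm : 1 ≤ m) (l : ℕ) (hl : l ≤ 2 * m) (ϱ w : ℂ) :
    (l ≤ m →
      Ffun m l ϱ w =
        (((2 * m).choose l : ℂ))⁻¹ * (m.choose l : ℂ) *
          (((1 + ‖ϱ‖ ^ 2 : ℝ) ^ ((m : ℝ) / 2) : ℝ) : ℂ) *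
          Lfun ϱ w ^ (m - l) * Mfun ϱ w ^ l) ∧
    (m < l → Ffun m l ϱ w = 0) :=
  stmt_5_general m l hl ϱ w
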